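/- If (B, ≺_λ, ≻_λ, α, β) is a BiHom-dendriform conformal algebra, then (B, ·_λ, α, β), where x ·_λ y = x ≺_λ y + x ≻_λ y, is a BiHom-associative conformal algebra. -/

import Mathlib

/-!
Common framework: conformal λ-maps over ℂ[∂]-modules, recorded by the
coefficients of their λ-expansion, together with evaluation at a complex
number λ and "evaluation at −∂−λ".
-/

namespace ConfAlg

/-- A conformal λ-map from `B` to conformal operators on `M`: the value
`x *_λ m` is the polynomial `∑ₙ λⁿ • (coef n)` recorded as a finitely
supported family of coefficients, ℂ-bilinear in `x` and `m`. -/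
abbrev CMap (B M : Type) [AddCommGroup B] [Module ℂ B]
    [AddCommGroup M] [Module ℂ M] :=
  B →ₗ[ℂ] M →ₗ[ℂ] (ℕ →₀ M)

section Defs

variable {B M : Type} [AddCommGroup B] [Module ℂ B] [AddCommGroup M] [Module ℂ M]

/-- Evaluation of a conformal λ-map at a complex number `l`. -/
noncomputable def ev (f : CMap B M) (l : ℂ) (x : B) (m : M) : M :=
  (f x m).sum fun n b => l ^ n • b

/-- Evaluation of a conformal λ-map at `−∂−l`: the operator `(−∂−l)ⁿ`
is applied to the `n`-th coefficient, where `∂` acts on `M` via `DM`. -/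
noncomputable def evD (DM : Module.End ℂ M) (f : CMap B M) (l : ℂ) (x : B) (m : M) : M :=
  (f x m).sum fun n b => ((-DM - l • (1 : Module.End ℂ M)) ^ n) b

/-- Conformal sesquilinearity: `(∂x)_λ m = −λ (x_λ m)` and
`x_λ (∂m) = (∂+λ)(x_λ m)`. -/
def Sesq (D : Module.End ℂ B) (DM : Module.End ℂ M) (f : CMap B M) : Prop :=
  (∀ (l : ℂ) (x : B) (m : M), ev f l (D x) m = (-l) • ev f l x m) ∧
  (∀ (l : ℂ) (x : B) (m : M), ev f l x (DM m) = DM (ev f l x m) + l • ev f l x m)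

end Defs

/-- The data of a (BiHom-associative) conformal algebra: the action of `∂`,
a conformal λ-product, and two structure maps. -/
structure AssocData (B : Type) [AddCommGroup B] [Module ℂ B] where
  D : Module.End ℂ B
  mul : CMap B B
  α : Module.End ℂ B
  β : Module.End ℂ B

namespace AssocData

variable {B : Type} [AddCommGroup B] [Module ℂ B]

/-- `(B, *_λ, α, β)` is a BiHom-associative conformal algebra. -/
def IsAssoc (A : AssocData B) : Prop :=
  A.α ∘ₗ A.D = A.D ∘ₗ A.α ∧ A.β ∘ₗ A.D = A.D ∘ₗ A.β ∧ A.α ∘ₗ A.β = A.β ∘ₗ A.α ∧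
  Sesq A.D A.D A.mul ∧
  ∀ (l μ : ℂ) (x y z : B),
    ev A.mul l (A.α x) (ev A.mul μ y z) = ev A.mul (l + μ) (ev A.mul l x y) (A.β z)

/-- Commutativity: `x *_λ y = y *_{−∂−λ} x`. -/
def IsComm (A : AssocData B) : Prop :=
  ∀ (l : ℂ) (x y : B), ev A.mul l x y = evD A.D A.mul l y x

/-- Multiplicativity of the structure maps. -/
def IsMult (A : AssocData B) : Prop :=
  (∀ (l : ℂ) (x y : B), A.α (ev A.mul l x y) = ev A.mul l (A.α x) (A.α y)) ∧
  (∀ (l : ℂ) (x y : B), A.β (ev A.mul l x y) = ev A.mul l (A.β x) (A.β y))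

end AssocData

/-- The data of a (BiHom-Lie) conformal algebra. -/
structure LieData (B : Type) [AddCommGroup B] [Module ℂ B] where
  D : Module.End ℂ B
  br : CMap B B
  α : Module.End ℂ B
  β : Module.End ℂ B

namespace LieData

variable {B : Type} [AddCommGroup B] [Module ℂ B]

/-- `(B, [·_λ·], α, β)` is a BiHom-Lie conformal algebra. -/
def IsLie (L : LieData B) : Prop :=
  L.α ∘ₗ L.D = L.D ∘ₗ L.α ∧ L.β ∘ₗ L.D = L.D ∘ₗ L.β ∧ L.α ∘ₗ L.β = L.β ∘ₗ L.α ∧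
  Sesq L.D L.D L.br ∧
  (∀ (l : ℂ) (x y : B),
    ev L.br l (L.β x) (L.α y) = - evD L.D L.br l (L.β y) (L.α x)) ∧
  ∀ (l μ : ℂ) (x y z : B),
    ev L.br l (L.α (L.β x)) (ev L.br μ y z)
      = ev L.br (l + μ) (ev L.br l (L.β x) y) (L.β z)
        + ev L.br μ (L.β y) (ev L.br l (L.α x) z)

/-- Multiplicativity of the structure maps. -/
def IsMult (L : LieData B) : Prop :=
  (∀ (l : ℂ) (x y : B), L.α (ev L.br l x y) = ev L.br l (L.α x) (L.α y)) ∧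
  (∀ (l : ℂ) (x y : B), L.β (ev L.br l x y) = ev L.br l (L.β x) (L.β y))

end LieData

/-- The data of a (BiHom-)Poisson conformal algebra. -/
structure PoissonData (B : Type) [AddCommGroup B] [Module ℂ B] where
  D : Module.End ℂ B
  mul : CMap B B
  br : CMap B B
  α : Module.End ℂ B
  β : Module.End ℂ B

namespace PoissonData

variable {B : Type} [AddCommGroup B] [Module ℂ B]

def toAssoc (P : PoissonData B) : AssocData B := ⟨P.D, P.mul, P.α, P.β⟩

def toLie (P : PoissonData B) : LieData B := ⟨P.D, P.br, P.α, P.β⟩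

/-- The BiHom-Leibniz identity
`[αβ(x)_λ (y *_μ z)] = [β(x)_λ y] *_{λ+μ} β(z) + β(y) *_μ [α(x)_λ z]`. -/
def Leibniz (P : PoissonData B) : Prop :=
  ∀ (l μ : ℂ) (x y z : B),
    ev P.br l (P.α (P.β x)) (ev P.mul μ y z)
      = ev P.mul (l + μ) (ev P.br l (P.β x) y) (P.β z)
        + ev P.mul μ (P.β y) (ev P.br l (P.α x) z)

/-- `(B, *_λ, [·_λ·], α, β)` is a BiHom-Poisson conformal algebra. -/
def IsPoisson (P : PoissonData B) : Prop :=
  P.toAssoc.IsAssoc ∧ P.toAssoc.IsComm ∧ P.toLie.IsLie ∧ P.Leibniz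

/-- A noncommutative BiHom-Poisson conformal algebra (commutativity of `*_λ`
is not required). -/
def IsNCPoisson (P : PoissonData B) : Prop :=
  P.toAssoc.IsAssoc ∧ P.toLie.IsLie ∧ P.Leibniz

/-- Multiplicativity of the structure maps with respect to both products. -/
def IsMult (P : PoissonData B) : Prop :=
  P.toAssoc.IsMult ∧ P.toLie.IsMult

end PoissonData

/-- The data of a BiHom-dendriform conformal algebra; `lt` is `≺`, `gt` is `≻`. -/
structure DendData (B : Type) [AddCommGroup B] [Module ℂ B] where
  D : Module.End ℂ B
  lt : CMap B B
  gt : CMap B B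
  α : Module.End ℂ B
  β : Module.End ℂ B

namespace DendData

variable {B : Type} [AddCommGroup B] [Module ℂ B]

/-- `(B, ≺_λ, ≻_λ, α, β)` is a BiHom-dendriform conformal algebra. -/
def IsDend (Dd : DendData B) : Prop :=
  Dd.α ∘ₗ Dd.D = Dd.D ∘ₗ Dd.α ∧ Dd.β ∘ₗ Dd.D = Dd.D ∘ₗ Dd.β ∧
  Dd.α ∘ₗ Dd.β = Dd.β ∘ₗ Dd.α ∧
  Sesq Dd.D Dd.D Dd.lt ∧ Sesq Dd.D Dd.D Dd.gt ∧
  (∀ (l : ℂ) (x y : B), Dd.α (ev Dd.lt l x y) = ev Dd.lt l (Dd.α x) (Dd.α y)) ∧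
  (∀ (l : ℂ) (x y : B), Dd.α (ev Dd.gt l x y) = ev Dd.gt l (Dd.α x) (Dd.α y)) ∧
  (∀ (l : ℂ) (x y : B), Dd.β (ev Dd.lt l x y) = ev Dd.lt l (Dd.β x) (Dd.β y)) ∧
  (∀ (l : ℂ) (x y : B), Dd.β (ev Dd.gt l x y) = ev Dd.gt l (Dd.β x) (Dd.β y)) ∧
  (∀ (l μ : ℂ) (x y z : B),
    ev Dd.lt (l + μ) (ev Dd.lt l x y) (Dd.β z)
      = ev Dd.lt l (Dd.α x) (ev Dd.lt μ y z + ev Dd.gt μ y z)) ∧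
  (∀ (l μ : ℂ) (x y z : B),
    ev Dd.lt (l + μ) (ev Dd.gt l x y) (Dd.β z)
      = ev Dd.gt l (Dd.α x) (ev Dd.lt μ y z)) ∧
  ∀ (l μ : ℂ) (x y z : B),
    ev Dd.gt l (Dd.α x) (ev Dd.gt μ y z)
      = ev Dd.gt (l + μ) (ev Dd.lt l x y + ev Dd.gt l x y) (Dd.β z)

end DendData

/-- The data of a BiHom-preLie conformal algebra. -/
structure PreLieData (B : Type) [AddCommGroup B] [Module ℂ B] where
  D : Module.End ℂ B
  mul : CMap B B
  α : Module.End ℂ B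
  β : Module.End ℂ B

namespace PreLieData

variable {B : Type} [AddCommGroup B] [Module ℂ B]

/-- `(B, *_λ, α, β)` is a BiHom-preLie conformal algebra. -/
def IsPreLie (P : PreLieData B) : Prop :=
  P.α ∘ₗ P.D = P.D ∘ₗ P.α ∧ P.β ∘ₗ P.D = P.D ∘ₗ P.β ∧ P.α ∘ₗ P.β = P.β ∘ₗ P.α ∧
  Sesq P.D P.D P.mul ∧
  (∀ (l : ℂ) (x y : B), P.α (ev P.mul l x y) = ev P.mul l (P.α x) (P.α y)) ∧
  (∀ (l : ℂ) (x y : B), P.β (ev P.mul l x y) = ev P.mul l (P.β x) (P.β y)) ∧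
  ∀ (l μ : ℂ) (x y z : B),
    ev P.mul (l + μ) (ev P.mul l (P.β x) (P.α y)) (P.β z)
        - ev P.mul l (P.α (P.β x)) (ev P.mul μ (P.α y) z)
      = ev P.mul (l + μ) (ev P.mul μ (P.β y) (P.α x)) (P.β z)
        - ev P.mul μ (P.α (P.β y)) (ev P.mul l (P.α x) z)

end PreLieData

/-- The data of a BiHom-pre-Poisson conformal algebra. -/
structure PrePoissonData (B : Type) [AddCommGroup B] [Module ℂ B] where
  D : Module.End ℂ B
  lt : CMap B B
  gt : CMap B B
  star : CMap B B
  α : Module.End ℂ B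
  β : Module.End ℂ B

namespace PrePoissonData

variable {B : Type} [AddCommGroup B] [Module ℂ B]

def toDend (P : PrePoissonData B) : DendData B := ⟨P.D, P.lt, P.gt, P.α, P.β⟩

def toPreLie (P : PrePoissonData B) : PreLieData B := ⟨P.D, P.star, P.α, P.β⟩

/-- `(B, ≺_λ, ≻_λ, *_λ, α, β)` is a BiHom-pre-Poisson conformal algebra. -/
def IsPrePoisson (P : PrePoissonData B) : Prop :=
  P.toDend.IsDend ∧ P.toPreLie.IsPreLie ∧
  (∀ (l μ : ℂ) (x y z : B),
    ev P.lt (l + μ)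
        (ev P.star l (P.β x) (P.α y) - evD P.D P.star l (P.β y) (P.α x)) (P.β z)
      = ev P.star l (P.α (P.β x)) (ev P.lt μ (P.α y) z)
        - ev P.lt μ (P.α (P.β y)) (ev P.star l (P.α x) z)) ∧
  (∀ (l μ : ℂ) (x y z : B),
    ev P.gt l (P.β x)
        (ev P.star μ (P.α (P.β y)) (P.α z) - evD P.D P.star μ (P.β z) (P.α (P.α y)))
      = ev P.star μ (P.α (P.β (P.β y))) (ev P.gt l x (P.α z))
        - ev P.gt (l + μ) (ev P.star μ (P.β (P.β y)) x) (P.α (P.β z))) ∧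
  ∀ (l μ : ℂ) (x y z : B),
    ev P.star (l + μ) (ev P.lt l (P.β x) (P.α y) + ev P.gt l (P.β x) (P.α y)) (P.β z)
      = evD P.D P.gt μ (ev P.star l (P.β x) (P.α z)) (P.β y)
        + ev P.lt l (P.α (P.β x)) (ev P.star μ (P.α y) z)

end PrePoissonData

section Reps

variable {B M : Type} [AddCommGroup B] [Module ℂ B] [AddCommGroup M] [Module ℂ M]

/-- `(M, l, r, φ, ψ)` is a conformal representation of the BiHom-associative
conformal algebra `A`. -/
def IsAssocRep (A : AssocData B) (DM φ ψ : Module.End ℂ M) (lA rA : CMap B M) : Prop :=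
  φ ∘ₗ DM = DM ∘ₗ φ ∧ ψ ∘ₗ DM = DM ∘ₗ ψ ∧
  Sesq A.D DM lA ∧ Sesq A.D DM rA ∧
  (∀ (l : ℂ) (x : B) (m : M), φ (ev lA l x m) = ev lA l (A.α x) (φ m)) ∧
  (∀ (l : ℂ) (x : B) (m : M), φ (ev rA l x m) = ev rA l (A.α x) (φ m)) ∧
  (∀ (l : ℂ) (x : B) (m : M), ψ (ev lA l x m) = ev lA l (A.β x) (ψ m)) ∧
  (∀ (l : ℂ) (x : B) (m : M), ψ (ev rA l x m) = ev rA l (A.β x) (ψ m)) ∧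
  (∀ (l μ : ℂ) (x y : B) (m : M),
    ev lA (l + μ) (ev A.mul l x y) (ψ m) = ev lA l (A.α x) (ev lA μ y m)) ∧
  (∀ (l μ : ℂ) (x y : B) (m : M),
    ev rA (l + μ) (ev A.mul l x y) (φ m) = ev rA l (A.β y) (ev rA μ x m)) ∧
  ∀ (l μ : ℂ) (x y : B) (m : M),
    ev lA l (A.α x) (ev rA μ y m) = ev rA μ (A.β y) (ev lA l x m)

/-- `(M, ρ, φ, ψ)` is a conformal representation of the BiHom-Lie conformal
algebra `L`. -/
def IsLieRep (L : LieData B) (DM φ ψ : Module.End ℂ M) (ρ : CMap B M) : Prop :=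
  φ ∘ₗ DM = DM ∘ₗ φ ∧ ψ ∘ₗ DM = DM ∘ₗ ψ ∧
  Sesq L.D DM ρ ∧
  (∀ (l : ℂ) (x : B) (m : M), φ (ev ρ l x m) = ev ρ l (L.α x) (φ m)) ∧
  (∀ (l : ℂ) (x : B) (m : M), ψ (ev ρ l x m) = ev ρ l (L.β x) (ψ m)) ∧
  ∀ (l μ : ℂ) (x y : B) (m : M),
    ev ρ (l + μ) (ev L.br l (L.β x) y) (ψ m)
      = ev ρ l (L.α (L.β x)) (ev ρ μ y m) - ev ρ μ (L.β y) (ev ρ l (L.α x) m)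

/-- `(M, l, r, ρ, φ, ψ)` is a conformal representation of the BiHom-Poisson
conformal algebra `P`. -/
def IsPoissonRep (P : PoissonData B) (DM φ ψ : Module.End ℂ M)
    (lA rA ρ : CMap B M) : Prop :=
  IsAssocRep P.toAssoc DM φ ψ lA rA ∧ IsLieRep P.toLie DM φ ψ ρ ∧
  (∀ (l μ : ℂ) (x y : B) (m : M),
    ev lA (l + μ) (ev P.br l (P.β x) y) (ψ m)
      = ev ρ l (P.α (P.β x)) (ev lA μ y m) - ev lA μ (P.β y) (ev ρ l (P.α x) m)) ∧
  (∀ (l μ : ℂ) (x y : B) (m : M),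
    ev rA (l + μ) (ev P.br l (P.α x) y) (ψ m)
      = ev ρ l (P.α (P.β x)) (ev rA μ y m) - ev rA μ (P.β y) (ev ρ l (P.β x) m)) ∧
  ∀ (l μ : ℂ) (x y : B) (m : M),
    ev ρ (l + μ) (ev P.mul l x y) (φ (ψ m))
      = ev lA l (P.α x) (ev ρ μ y (φ m)) - ev lA μ (P.α y) (ev ρ l x (ψ m))

/-- `(M, l_*, r_*, φ, ψ)` is a conformal representation of the BiHom-preLie
conformal algebra `P`. -/
def IsPreLieRep (P : PreLieData B) (DM φ ψ : Module.End ℂ M)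
    (lS rS : CMap B M) : Prop :=
  φ ∘ₗ DM = DM ∘ₗ φ ∧ ψ ∘ₗ DM = DM ∘ₗ ψ ∧
  Sesq P.D DM lS ∧ Sesq P.D DM rS ∧
  (∀ (l : ℂ) (x : B) (m : M), φ (ev lS l x m) = ev lS l (P.α x) (φ m)) ∧
  (∀ (l : ℂ) (x : B) (m : M), φ (ev rS l x m) = ev rS l (P.α x) (φ m)) ∧
  (∀ (l : ℂ) (x : B) (m : M), ψ (ev lS l x m) = ev lS l (P.β x) (ψ m)) ∧
  (∀ (l : ℂ) (x : B) (m : M), ψ (ev rS l x m) = ev rS l (P.β x) (ψ m)) ∧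
  (∀ (l μ : ℂ) (x y : B) (m : M),
    ev lS (l + μ)
        (ev P.mul l (P.β x) (P.α y) - evD P.D P.mul l (P.β y) (P.α x)) (ψ m)
      = ev lS l (P.α (P.β x)) (ev lS μ (P.α y) m)
        - ev lS μ (P.α (P.β y)) (ev lS l (P.α x) m)) ∧
  ∀ (l μ : ℂ) (x y : B) (m : M),
    ev rS μ (P.β y) (ev lS l (P.β x) (φ m) - ev rS l (P.α x) (ψ m))
      = ev lS l (P.α (P.β x)) (ev rS μ y (φ m))
        - ev rS (l + μ) (ev P.mul l (P.α x) y) (φ (ψ m))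

end Reps

/-- A bundled ℂ[∂]-module (used to quantify over representation spaces). -/
structure RepModule where
  M : Type
  [grp : AddCommGroup M]
  [mod : Module ℂ M]

attribute [instance] RepModule.grp RepModule.mod

end ConfAlg

/-!
Associativity of `x ·_λ y = x ≺_λ y + x ≻_λ y` splits into three identities:
`α(x) ·_λ (y ·_μ z)` is the sum of `α(x) ≺_λ (y ·_μ z)`, `α(x) ≻_λ (y ≺_μ z)` and
`α(x) ≻_λ (y ≻_μ z)`, which the three dendriform axioms equate with `(x ≺_λ y) ≺_{λ+μ} β(z)`,
`(x ≻_λ y) ≺_{λ+μ} β(z)` and `(x ·_λ y) ≻_{λ+μ} β(z)`, the three summands of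
`(x ·_λ y) ·_{λ+μ} β(z)`.
-/

namespace ConfAlg

section Additivity

variable {B M : Type} [AddCommGroup B] [Module ℂ B] [AddCommGroup M] [Module ℂ M]

lemma ev_add (f g : CMap B M) (l : ℂ) (x : B) (m : M) :
    ev (f + g) l x m = ev f l x m + ev g l x m :=
  Finsupp.sum_add_index' (fun _ => smul_zero _) (fun _ _ _ => smul_add _ _ _)

lemma ev_add_left (f : CMap B M) (l : ℂ) (x y : B) (m : M) :
    ev f l (x + y) m = ev f l x m + ev f l y m := by
  rw [ev, map_add, LinearMap.add_apply]
  exact Finsupp.sum_add_index' (fun _ => smul_zero _) (fun _ _ _ => smul_add _ _ _)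

lemma ev_add_right (f : CMap B M) (l : ℂ) (x : B) (m n : M) :
    ev f l x (m + n) = ev f l x m + ev f l x n := by
  rw [ev, map_add]
  exact Finsupp.sum_add_index' (fun _ => smul_zero _) (fun _ _ _ => smul_add _ _ _)

lemma Sesq.add {D : Module.End ℂ B} {DM : Module.End ℂ M} {f g : CMap B M}
    (hf : Sesq D DM f) (hg : Sesq D DM g) : Sesq D DM (f + g) := by
  constructor
  · intro l x m
    rw [ev_add, ev_add, hf.1, hg.1, smul_add]
  · intro l x m
    rw [ev_add, ev_add, hf.2, hg.2, map_add, smul_add]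
    abel

end Additivity

namespace DendData

variable {B : Type} [AddCommGroup B] [Module ℂ B]

noncomputable def toAssoc (Dd : DendData B) : AssocData B := ⟨Dd.D, Dd.lt + Dd.gt, Dd.α, Dd.β⟩

lemma IsDend.add_assoc {Dd : DendData B} (h : Dd.IsDend) (l μ : ℂ) (x y z : B) :
    ev (Dd.lt + Dd.gt) l (Dd.α x) (ev (Dd.lt + Dd.gt) μ y z)
      = ev (Dd.lt + Dd.gt) (l + μ) (ev (Dd.lt + Dd.gt) l x y) (Dd.β z) := by
  obtain ⟨-, -, -, -, -, -, -, -, -, lt_lt, gt_lt, gt_gt⟩ := h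
  simp only [ev_add, ev_add_left, ev_add_right] at lt_lt gt_gt ⊢
  rw [lt_lt, gt_lt, gt_gt]
  abel

lemma IsDend.isAssoc_toAssoc {Dd : DendData B} (h : Dd.IsDend) : Dd.toAssoc.IsAssoc := by
  have assoc := h.add_assoc
  obtain ⟨αD, βD, αβ, lt_sesq, gt_sesq, -⟩ := h
  exact ⟨αD, βD, αβ, lt_sesq.add gt_sesq, assoc⟩

end DendData

end ConfAlg

open ConfAlg in
/-- for a BiHom-dendriform conformal algebra, the sum
`x ·_λ y = x ≺_λ y + x ≻_λ y` is a BiHom-associative conformal product. -/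
theorem stmt11 {B : Type} [AddCommGroup B] [Module ℂ B]
    (Dd : DendData B) (h : Dd.IsDend) :
    ∃ mul' : CMap B B,
      (∀ (l : ℂ) (x y : B), ev mul' l x y = ev Dd.lt l x y + ev Dd.gt l x y) ∧
      (AssocData.mk Dd.D mul' Dd.α Dd.β).IsAssoc :=
  ⟨Dd.lt + Dd.gt, ev_add Dd.lt Dd.gt, h.isAssoc_toAssoc⟩
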